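/- Let (A, A*) be a tridiagonal pair on V with eigenspace orderings V_0, ..., V_d of A and V*_0, ..., V*_d of A*, and let D denote the subalgebra of End(V) generated by A. If there exists a nonzero X ∈ D such that X V*_0 ⊆ V*_d, then the dimension of V over K equals d + 1. -/

import Mathlib

/-!
Write `X = ∑_{h ≤ d} c_h τ_h(A)` and, for `u ∈ V*_0`, put `w_h = τ_h(A) u`; it lies in the
component `U_h` of the split decomposition. Since `X u ∈ V*_d`, `(A* - θ*_d) X u = 0`, and as the
sum of the `U_h` is direct this splits into
`(A* - θ*_{ℓ+1}) (c_{ℓ+1} w_{ℓ+1}) = (θ*_d - θ*_ℓ) c_ℓ w_ℓ` for `ℓ < d`.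
Because `V*_0` meets `V_0 + ⋯ + V_{d-1} = ker τ_d(A)` trivially, no `τ_h(A)` with `h ≤ d` kills
`V*_0`, so the `c_h` stay nonzero from the first nonzero one on. Hence, for a suitable `u`, the
vectors `c_h w_h` span a nonzero subspace invariant under `A` and `A*`, which is `V` by
irreducibility: `dim V ≤ d + 1`. The `d + 1` eigenspaces of `A` give the reverse inequality.
-/

open Polynomial

/-- A tridiagonal pair on `V`, with eigenspace orderings `Ev 0, ..., Ev d` of `A`
(with eigenvalues `θ 0, ..., θ d`) and `Ew 0, ..., Ew d` of `B = A*`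
(with eigenvalues `θ' 0, ..., θ' d`).  For indices `i > d` we set `Ev i = ⊥`,
`Ew i = ⊥`, encoding the conventions `V_{-1} = 0`, `V_{d+1} = 0`
(note `Ev (0 - 1) = Ev 0` by truncated subtraction, which is harmless in the
tridiagonal conditions below since `Ev i` appears in the sum anyway). -/
structure TridiagonalPair (K V : Type*) [Field K] [AddCommGroup V] [Module K V]
    [FiniteDimensional K V] where
  A : Module.End K V
  B : Module.End K V
  d : ℕ
  Ev : ℕ → Submodule K V
  Ew : ℕ → Submodule K V
  θ : ℕ → K
  θ' : ℕ → K
  hEv_eig : ∀ i ≤ d, Ev i = Module.End.eigenspace A (θ i)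
  hEv_ne : ∀ i ≤ d, Ev i ≠ ⊥
  hEv_all : ∀ μ : K, Module.End.eigenspace A μ ≠ ⊥ → ∃ i ≤ d, θ i = μ
  hθ_inj : ∀ i ≤ d, ∀ j ≤ d, θ i = θ j → i = j
  hEv_top : (⨆ i ∈ Finset.range (d + 1), Ev i) = ⊤
  hEv_bot : ∀ i, d < i → Ev i = ⊥
  hEw_eig : ∀ i ≤ d, Ew i = Module.End.eigenspace B (θ' i)
  hEw_ne : ∀ i ≤ d, Ew i ≠ ⊥
  hEw_all : ∀ μ : K, Module.End.eigenspace B μ ≠ ⊥ → ∃ i ≤ d, θ' i = μ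
  hθ'_inj : ∀ i ≤ d, ∀ j ≤ d, θ' i = θ' j → i = j
  hEw_top : (⨆ i ∈ Finset.range (d + 1), Ew i) = ⊤
  hEw_bot : ∀ i, d < i → Ew i = ⊥
  hTriB : ∀ i ≤ d, ∀ v ∈ Ev i, B v ∈ Ev (i - 1) ⊔ Ev i ⊔ Ev (i + 1)
  hTriA : ∀ i ≤ d, ∀ v ∈ Ew i, A v ∈ Ew (i - 1) ⊔ Ew i ⊔ Ew (i + 1)
  hIrr : ∀ W : Submodule K V, (∀ v ∈ W, A v ∈ W) → (∀ v ∈ W, B v ∈ W) →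
    W = ⊥ ∨ W = ⊤

/-- The polynomial `τ_i = (λ - θ_0)(λ - θ_1) ⋯ (λ - θ_{i-1})`. -/
noncomputable def tau {K : Type*} [Field K] (θ : ℕ → K) (i : ℕ) : Polynomial K :=
  ∏ k ∈ Finset.range i, (X - C (θ k))

lemma aeval_tau_succ {K R : Type*} [Field K] [Ring R] [Algebra K R] (θ : ℕ → K) (a : R)
    (n : ℕ) : aeval a (tau θ (n + 1)) = (a - algebraMap K R (θ n)) * aeval a (tau θ n) := by
  rw [tau, Finset.prod_range_succ, ← tau, mul_comm, map_mul, map_sub, aeval_X, aeval_C]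

namespace TridiagonalPair

variable {K V : Type*} [Field K] [AddCommGroup V] [Module K V] [FiniteDimensional K V]
  (p : TridiagonalPair K V)

open Set

@[simps]
def swap : TridiagonalPair K V where
  A := p.B
  B := p.A
  d := p.d
  Ev := p.Ew
  Ew := p.Ev
  θ := p.θ'
  θ' := p.θ
  hEv_eig := p.hEw_eig
  hEv_ne := p.hEw_ne
  hEv_all := p.hEw_all
  hθ_inj := p.hθ'_inj
  hEv_top := p.hEw_top
  hEv_bot := p.hEw_bot
  hEw_eig := p.hEv_eig
  hEw_ne := p.hEv_ne
  hEw_all := p.hEv_all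
  hθ'_inj := p.hθ_inj
  hEw_top := p.hEv_top
  hEw_bot := p.hEv_bot
  hTriB := p.hTriA
  hTriA := p.hTriB
  hIrr W hA hB := p.hIrr W hB hA

-- Since `Ev k = ⊥` for `k > d`, unbounded index sets such as `Ici h` are harmless.
def evSum (s : Set ℕ) : Submodule K V := ⨆ k ∈ s, p.Ev k

lemma Ev_le_evSum {k : ℕ} {s : Set ℕ} (hk : k ∈ s) : p.Ev k ≤ p.evSum s :=
  le_biSup p.Ev hk

lemma evSum_mono {s t : Set ℕ} (hst : s ⊆ t) : p.evSum s ≤ p.evSum t :=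
  biSup_mono hst

@[simp]
lemma evSum_empty : p.evSum ∅ = ⊥ := by
  simp [evSum]

lemma evSum_eq_top {s : Set ℕ} (hs : ∀ k ≤ p.d, k ∈ s) : p.evSum s = ⊤ :=
  top_unique <| p.hEv_top.symm.le.trans <|
    biSup_mono fun k hk => hs k (Nat.lt_succ_iff.mp (Finset.mem_range.mp hk))

lemma A_apply_of_mem_Ev {k : ℕ} (hk : k ≤ p.d) {v : V} (hv : v ∈ p.Ev k) :
    p.A v = p.θ k • v :=
  Module.End.mem_eigenspace_iff.mp (p.hEv_eig k hk ▸ hv)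

lemma A_sub_smul_mem_evSum (j : ℕ) {s t : Set ℕ} (hst : ∀ k ∈ s, k ≠ j → k ∈ t) {v : V}
    (hv : v ∈ p.evSum s) : p.A v - p.θ j • v ∈ p.evSum t := by
  suffices p.evSum s ≤ (p.evSum t).comap (p.A - p.θ j • 1) from this hv
  refine iSup₂_le fun k hk w hw => ?_
  by_cases hkd : k ≤ p.d
  · simp only [Submodule.mem_comap, LinearMap.sub_apply, LinearMap.smul_apply,
      Module.End.one_apply, p.A_apply_of_mem_Ev hkd hw, ← sub_smul]
    by_cases hkj : k = j
    · simp [hkj]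
    · exact Submodule.smul_mem _ _ (p.Ev_le_evSum (hst k hk hkj) hw)
  · rw [p.hEv_bot k (by omega), Submodule.mem_bot] at hw
    simp [hw]

lemma B_mem_evSum {s t : Set ℕ} (hst : ∀ k ∈ s, k - 1 ∈ t ∧ k ∈ t ∧ k + 1 ∈ t) {v : V}
    (hv : v ∈ p.evSum s) : p.B v ∈ p.evSum t := by
  suffices p.evSum s ≤ (p.evSum t).comap p.B from this hv
  refine iSup₂_le fun k hk w hw => ?_
  by_cases hkd : k ≤ p.d
  · obtain ⟨h₁, h₂, h₃⟩ := hst k hk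
    exact sup_le (sup_le (p.Ev_le_evSum h₁) (p.Ev_le_evSum h₂)) (p.Ev_le_evSum h₃)
      (p.hTriB k hkd w hw)
  · rw [p.hEv_bot k (by omega), Submodule.mem_bot] at hw
    simp [hw]

lemma disjoint_Ev_evSum {j : ℕ} (hj : j ≤ p.d) {s : Set ℕ} (hs : j ∉ s) :
    Disjoint (p.Ev j) (p.evSum s) := by
  have hle : p.evSum s ≤ ⨆ μ ∈ p.θ '' (s ∩ Iic p.d), p.A.eigenspace μ := by
    refine iSup₂_le fun k hk => ?_
    by_cases hkd : k ≤ p.d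
    · rw [p.hEv_eig k hkd]
      exact le_biSup p.A.eigenspace (mem_image_of_mem _ ⟨hk, hkd⟩)
    · simp [p.hEv_bot k (by omega)]
  refine Disjoint.mono_right hle ?_
  rw [p.hEv_eig j hj]
  refine (Module.End.eigenspaces_iSupIndep p.A).disjoint_biSup ?_
  rintro ⟨k, ⟨hk, hkd⟩, hkj⟩
  exact hs (p.hθ_inj k hkd j hj hkj ▸ hk)

lemma evSum_ne_top {j : ℕ} (hj : j ≤ p.d) {s : Set ℕ} (hs : j ∉ s) : p.evSum s ≠ ⊤ := by
  intro h
  have := p.disjoint_Ev_evSum hj hs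
  rw [h, disjoint_top] at this
  exact p.hEv_ne j hj this

lemma aeval_tau_succ_apply (n : ℕ) (v : V) :
    aeval p.A (tau p.θ (n + 1)) v =
      p.A (aeval p.A (tau p.θ n) v) - p.θ n • aeval p.A (tau p.θ n) v := by
  rw [aeval_tau_succ, Module.End.mul_apply, LinearMap.sub_apply, Module.algebraMap_end_apply]

lemma ker_aeval_tau {n : ℕ} (hn : n ≤ p.d + 1) :
    LinearMap.ker (aeval p.A (tau p.θ n)) = p.evSum (Iio n) := by
  induction n with
  | zero => simp [tau, evSum, Module.End.one_eq_id]
  | succ n ih =>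
    have hcop : IsCoprime (tau p.θ n) (X - C (p.θ n)) :=
      IsCoprime.prod_left fun k hk => isCoprime_X_sub_C_of_isUnit_sub <| Ne.isUnit <|
        sub_ne_zero.mpr fun h => by
          rw [Finset.mem_range] at hk
          exact hk.ne (p.hθ_inj k (by omega) n (by omega) h)
    have hIio : Iio (n + 1) = insert n (Iio n) := by ext; simp
    rw [tau, Finset.prod_range_succ, ← tau, ← sup_ker_aeval_eq_ker_aeval_mul_of_coprime _ hcop,
      ih (by omega), map_sub, aeval_X, aeval_C, Module.algebraMap_end_eq_smul_id,
      ← Module.End.one_eq_id, ← Module.End.eigenspace_def, ← p.hEv_eig n (by omega), evSum,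
      evSum, hIio, iSup_insert, sup_comm]

lemma aeval_tau_eq_zero : aeval p.A (tau p.θ (p.d + 1)) = 0 :=
  LinearMap.ker_eq_top.mp <| (p.ker_aeval_tau le_rfl).trans <| p.evSum_eq_top fun k hk => by
    simpa using Nat.lt_succ_of_le hk

/-- The sum over `h` of `(V*_0 + ⋯ + V*_{h-1}) ∩ G h` is invariant under `A` and `A*` and lies in
`G 1 ≠ V`, so by irreducibility it is zero. -/
lemma disjoint_evSum_swap_Iio {G : ℕ → Submodule K V} (φ : ℕ → K) (hG : Antitone G)
    (hA : ∀ h, ∀ v ∈ G h, p.A v - φ h • v ∈ G (h + 1))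
    (hB : ∀ h, ∀ v ∈ G (h + 1), p.B v ∈ G h) (hG1 : G 1 ≠ ⊤) (h : ℕ) :
    Disjoint (p.swap.evSum (Iio h)) (G h) := by
  set W := ⨆ h, p.swap.evSum (Iio h) ⊓ G h
  have hterm (h : ℕ) : p.swap.evSum (Iio h) ⊓ G h ≤ W :=
    le_iSup (fun h => p.swap.evSum (Iio h) ⊓ G h) h
  have hWA : W ≤ W.comap p.A := iSup_le fun h x hx => by
    have hAx : p.A x ∈ p.swap.evSum (Iio (h + 1)) :=
      p.swap.B_mem_evSum (fun k hk => by simp only [mem_Iio] at hk ⊢; omega) hx.1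
    have hφx := Submodule.smul_mem _ (φ h) hx
    rw [Submodule.mem_comap, ← sub_add_cancel (p.A x) (φ h • x)]
    refine add_mem (hterm (h + 1) ⟨sub_mem hAx ?_, hA h x hx.2⟩) (hterm h hφx)
    exact p.swap.evSum_mono (Iio_subset_Iio h.le_succ) hφx.1
  have hWB : W ≤ W.comap p.B := iSup_le fun h x hx => by
    rcases h with _ | h
    · obtain rfl : x = 0 := by simpa using hx.1
      exact zero_mem _
    have hBx : p.B x - p.θ' h • x ∈ p.swap.evSum (Iio h) ⊓ G h :=
      ⟨p.swap.A_sub_smul_mem_evSum h (fun k hk _ => by simp only [mem_Iio] at hk ⊢; omega) hx.1,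
        sub_mem (hB h x hx.2) (hG h.le_succ (Submodule.smul_mem _ _ hx.2))⟩
    rw [Submodule.mem_comap, ← sub_add_cancel (p.B x) (p.θ' h • x)]
    exact add_mem (hterm h hBx) (hterm (h + 1) (Submodule.smul_mem _ _ hx))
  have hWG : W ≤ G 1 := iSup_le fun h => by
    rcases h with _ | h
    · simp
    · exact inf_le_right.trans (hG (by omega))
  rcases p.hIrr W (fun v hv => hWA hv) (fun v hv => hWB hv) with hW | hW
  · exact disjoint_iff.mpr (eq_bot_iff.mpr (hW ▸ hterm h))
  · exact absurd (top_unique (hW ▸ hWG)) hG1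

lemma disjoint_evSum_swap_Iio_Ici (h : ℕ) :
    Disjoint (p.swap.evSum (Iio h)) (p.evSum (Ici h)) :=
  p.disjoint_evSum_swap_Iio p.θ (fun _ _ hij => p.evSum_mono (Ici_subset_Ici.mpr hij))
    (fun h _ => p.A_sub_smul_mem_evSum h fun k hk _ => by simp only [mem_Ici] at hk ⊢; omega)
    (fun h _ => p.B_mem_evSum fun k hk => by simp only [mem_Ici] at hk ⊢; omega)
    (p.evSum_ne_top (Nat.zero_le _) (by simp)) h

-- The same argument for the reversed ordering `V_d, …, V_0`, with `G h = V_0 + ⋯ + V_{d-h}`.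
lemma disjoint_Ew_zero_evSum_Iio : Disjoint (p.Ew 0) (p.evSum (Iio p.d)) := by
  have := p.disjoint_evSum_swap_Iio (G := fun h => p.evSum (Iio (p.d + 1 - h)))
    (fun h => p.θ (p.d - h)) (fun _ _ hij => p.evSum_mono (Iio_subset_Iio (by omega)))
    (fun h _ => p.A_sub_smul_mem_evSum _ fun k hk _ => by simp only [mem_Iio] at hk ⊢; omega)
    (fun h _ => p.B_mem_evSum fun k hk => by simp only [mem_Iio] at hk ⊢; omega)
    (p.evSum_ne_top le_rfl (by simp)) 1
  rw [Nat.add_sub_cancel] at this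
  exact this.mono_left (p.swap.Ev_le_evSum (by simp : 0 ∈ Iio 1))

/-- The split decomposition `U_h = (V*_0 + ⋯ + V*_h) ∩ (V_h + ⋯ + V_d)`. -/
def split (h : ℕ) : Submodule K V := p.swap.evSum (Iic h) ⊓ p.evSum (Ici h)

lemma A_sub_smul_mem_split {h : ℕ} {x : V} (hx : x ∈ p.split h) :
    p.A x - p.θ h • x ∈ p.split (h + 1) :=
  ⟨sub_mem (p.swap.B_mem_evSum (fun k hk => by simp only [mem_Iic] at hk ⊢; omega) hx.1)
      (p.swap.evSum_mono (Iic_subset_Iic.mpr h.le_succ) (Submodule.smul_mem _ _ hx.1)),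
    p.A_sub_smul_mem_evSum h (fun k hk _ => by simp only [mem_Ici] at hk ⊢; omega) hx.2⟩

lemma B_sub_smul_mem_split {h : ℕ} {x : V} (hx : x ∈ p.split (h + 1)) :
    p.B x - p.θ' (h + 1) • x ∈ p.split h :=
  ⟨p.swap.A_sub_smul_mem_evSum (h + 1) (fun k hk _ => by simp only [mem_Iic] at hk ⊢; omega) hx.1,
    sub_mem (p.B_mem_evSum (fun k hk => by simp only [mem_Ici] at hk ⊢; omega) hx.2)
      (p.evSum_mono (Ici_subset_Ici.mpr h.le_succ) (Submodule.smul_mem _ _ hx.2))⟩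

lemma B_sub_smul_eq_zero_of_mem_split_zero {x : V} (hx : x ∈ p.split 0) :
    p.B x - p.θ' 0 • x = 0 := by
  simpa using p.swap.A_sub_smul_mem_evSum (t := ∅) 0 (by simp) hx.1

lemma eq_zero_of_mem_split_of_sum_eq_zero {y : ℕ → V} (hy : ∀ h, y h ∈ p.split h) {n : ℕ}
    (hsum : ∑ h ∈ Finset.range n, y h = 0) {h : ℕ} (hh : h < n) : y h = 0 := by
  induction n with
  | zero => simp at hh
  | succ n ih =>
    rw [Finset.sum_range_succ] at hsum
    have hyn : y n = 0 := by
      refine (Submodule.disjoint_def.mp (p.disjoint_evSum_swap_Iio_Ici n)) _ ?_ (hy n).2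
      rw [eq_neg_of_add_eq_zero_right hsum]
      refine neg_mem (Submodule.sum_mem _ fun k hk => p.swap.evSum_mono ?_ (hy k).1)
      exact Iic_subset_Iio.mpr (Finset.mem_range.mp hk)
    rcases (Nat.lt_succ_iff_lt_or_eq.mp hh) with hh | rfl
    · exact ih (by rwa [hyn, add_zero] at hsum) hh
    · exact hyn

lemma aeval_tau_apply_mem_split {u : V} (hu : u ∈ p.Ew 0) (h : ℕ) :
    aeval p.A (tau p.θ h) u ∈ p.split h := by
  induction h with
  | zero =>
    rw [tau, Finset.prod_range_zero, map_one, Module.End.one_apply]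
    refine ⟨p.swap.Ev_le_evSum (by simp) hu, ?_⟩
    rw [p.evSum_eq_top fun k _ => by simp]
    trivial
  | succ h ih =>
    rw [p.aeval_tau_succ_apply]
    exact p.A_sub_smul_mem_split ih

open Finset in
lemma B_sub_smul_succ_eq_of_sum {z : ℕ → V} (hz : ∀ h, z h ∈ p.split h)
    (hB : p.B (∑ h ∈ range (p.d + 1), z h) = p.θ' p.d • ∑ h ∈ range (p.d + 1), z h)
    {ℓ : ℕ} (hℓ : ℓ < p.d) :
    p.B (z (ℓ + 1)) - p.θ' (ℓ + 1) • z (ℓ + 1) = (p.θ' p.d - p.θ' ℓ) • z ℓ := by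
  set y : ℕ → V := fun h =>
    (p.B (z (h + 1)) - p.θ' (h + 1) • z (h + 1)) + (p.θ' h - p.θ' p.d) • z h
  have hy (h : ℕ) : y h ∈ p.split h :=
    add_mem (p.B_sub_smul_mem_split (hz (h + 1))) (Submodule.smul_mem _ _ (hz h))
  have hsum : ∑ h ∈ range p.d, y h = 0 := calc
    ∑ h ∈ range p.d, y h = ∑ h ∈ range (p.d + 1), (p.B (z h) - p.θ' h • z h) +
        ∑ h ∈ range (p.d + 1), (p.θ' h - p.θ' p.d) • z h := by
      rw [sum_add_distrib, sum_range_succ' (fun h => p.B (z h) - p.θ' h • z h),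
        sum_range_succ (fun h => (p.θ' h - p.θ' p.d) • z h),
        p.B_sub_smul_eq_zero_of_mem_split_zero (hz 0)]
      simp
    _ = p.B (∑ h ∈ range (p.d + 1), z h) - p.θ' p.d • ∑ h ∈ range (p.d + 1), z h := by
      rw [← sum_add_distrib, map_sum, smul_sum, ← sum_sub_distrib]
      exact sum_congr rfl fun h _ => by module
    _ = 0 := by rw [hB, sub_self]
  have := p.eq_zero_of_mem_split_of_sum_eq_zero hy hsum hℓ
  rw [← sub_eq_zero, ← this]
  module

lemma exists_aeval_tau_apply_ne_zero {h : ℕ} (hh : h ≤ p.d) :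
    ∃ u ∈ p.Ew 0, aeval p.A (tau p.θ h) u ≠ 0 := by
  by_contra! H
  have hle : p.Ew 0 ≤ p.evSum (Iio p.d) := fun u hu =>
    p.evSum_mono (Iio_subset_Iio hh)
      (p.ker_aeval_tau (n := h) (by omega) ▸ LinearMap.mem_ker.mpr (H u hu))
  exact p.hEw_ne 0 (Nat.zero_le _) (p.disjoint_Ew_zero_evSum_Iio.eq_bot_of_le hle)

lemma exists_eq_sum_smul_aeval_tau {X : Module.End K V} (hX : X ∈ Algebra.adjoin K {p.A}) :
    ∃ c : ℕ → K, X = ∑ h ∈ Finset.range (p.d + 1), c h • aeval p.A (tau p.θ h) := by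
  set M := Submodule.span K (range fun h : Fin (p.d + 1) => aeval p.A (tau p.θ h))
  have hgen {h : ℕ} (hh : h ≤ p.d) : aeval p.A (tau p.θ h) ∈ M :=
    Submodule.subset_span ⟨⟨h, Nat.lt_succ_of_le hh⟩, rfl⟩
  have hAM : ∀ x ∈ M, p.A * x ∈ M := by
    intro x hx
    refine Submodule.span_induction ?_ (by simp)
      (fun x y _ _ hx hy => by rw [mul_add]; exact add_mem hx hy)
      (fun a x _ hx => by rw [mul_smul_comm]; exact Submodule.smul_mem _ _ hx) hx
    rintro _ ⟨⟨h, hh⟩, rfl⟩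
    have hstep : p.A * aeval p.A (tau p.θ h) =
        aeval p.A (tau p.θ (h + 1)) + p.θ h • aeval p.A (tau p.θ h) := by
      rw [aeval_tau_succ, sub_mul, Algebra.algebraMap_eq_smul_one, smul_mul_assoc, one_mul,
        sub_add_cancel]
    rw [hstep]
    refine add_mem ?_ (Submodule.smul_mem _ _ (hgen (by omega)))
    rcases Nat.lt_or_ge h p.d with hlt | hge
    · exact hgen hlt
    · rw [show (h : ℕ) = p.d by omega, p.aeval_tau_eq_zero]
      exact zero_mem _
  have hXM : X ∈ M := by
    suffices (Algebra.adjoin K {p.A}).toSubmodule ≤ M from this hX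
    rw [Algebra.adjoin_eq_span, ← Submonoid.powers_eq_closure, Submodule.span_le]
    rintro _ ⟨n, rfl⟩
    induction n with
    | zero => simpa [tau] using hgen (Nat.zero_le _)
    | succ n ih =>
      change p.A ^ (n + 1) ∈ M
      rw [pow_succ']
      exact hAM _ ih
  obtain ⟨c, hc⟩ := (Submodule.mem_span_range_iff_exists_fun K).mp hXM
  refine ⟨fun h => if hh : h < p.d + 1 then c ⟨h, hh⟩ else 0, ?_⟩
  rw [← hc, Finset.sum_range]
  simp [Fin.is_le]

lemma d_add_one_le_finrank : p.d + 1 ≤ Module.finrank K V := by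
  have hev (i : Fin (p.d + 1)) : ∃ v, p.A.HasEigenvector (p.θ i) v := by
    obtain ⟨v, hv, hv0⟩ := Submodule.ne_bot_iff _ |>.mp (p.hEv_ne i (by omega))
    exact ⟨v, Module.End.hasEigenvector_iff.mpr ⟨p.hEv_eig i (by omega) ▸ hv, hv0⟩⟩
  choose v hv using hev
  have hli := Module.End.eigenvectors_linearIndependent' p.A (fun i : Fin (p.d + 1) => p.θ i)
    (fun i j hij => Fin.ext (p.hθ_inj i (by omega) j (by omega) hij)) v hv
  simpa using hli.fintype_card_le_finrank

lemma B_sub_smul_coeff_succ_eq {c : ℕ → K}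
    (hXV : ∀ u ∈ p.Ew 0,
      (∑ h ∈ Finset.range (p.d + 1), c h • aeval p.A (tau p.θ h)) u ∈ p.Ew p.d)
    {u : V} (hu : u ∈ p.Ew 0) {ℓ : ℕ} (hℓ : ℓ < p.d) :
    p.B (c (ℓ + 1) • aeval p.A (tau p.θ (ℓ + 1)) u) -
        p.θ' (ℓ + 1) • c (ℓ + 1) • aeval p.A (tau p.θ (ℓ + 1)) u =
      (p.θ' p.d - p.θ' ℓ) • c ℓ • aeval p.A (tau p.θ ℓ) u := by
  refine p.B_sub_smul_succ_eq_of_sum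
    (fun h => Submodule.smul_mem _ _ (p.aeval_tau_apply_mem_split hu h)) ?_ hℓ
  have := p.swap.A_apply_of_mem_Ev le_rfl (hXV u hu)
  simpa [LinearMap.sum_apply] using this

lemma coeff_succ_ne_zero {c : ℕ → K}
    (hXV : ∀ u ∈ p.Ew 0,
      (∑ h ∈ Finset.range (p.d + 1), c h • aeval p.A (tau p.θ h)) u ∈ p.Ew p.d)
    {ℓ : ℕ} (hℓ : ℓ < p.d) (hc : c ℓ ≠ 0) : c (ℓ + 1) ≠ 0 := by
  intro hc'
  obtain ⟨u, hu, hw⟩ := p.exists_aeval_tau_apply_ne_zero hℓ.le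
  have := p.B_sub_smul_coeff_succ_eq hXV hu hℓ
  rw [hc', zero_smul, smul_zero, map_zero, sub_zero, eq_comm, smul_eq_zero, smul_eq_zero,
    sub_eq_zero] at this
  rcases this with h | h | h
  · exact hℓ.ne (p.hθ'_inj ℓ hℓ.le p.d le_rfl h.symm)
  · exact hc h
  · exact hw h

lemma finrank_le_of_coeff_ne_zero {c : ℕ → K} (hc : ∃ h ≤ p.d, c h ≠ 0)
    (hXV : ∀ u ∈ p.Ew 0,
      (∑ h ∈ Finset.range (p.d + 1), c h • aeval p.A (tau p.θ h)) u ∈ p.Ew p.d) :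
    Module.finrank K V ≤ p.d + 1 := by
  obtain ⟨h₀, hh₀, hc₀⟩ := hc
  obtain ⟨u, hu, hwu⟩ := p.exists_aeval_tau_apply_ne_zero hh₀
  set z : ℕ → V := fun h => c h • aeval p.A (tau p.θ h) u
  set W := Submodule.span K (Set.range fun h : Fin (p.d + 1) => z h)
  have hz {h : ℕ} (hh : h ≤ p.d) : z h ∈ W :=
    Submodule.subset_span ⟨⟨h, Nat.lt_succ_of_le hh⟩, rfl⟩
  have hinv {f : Module.End K V} (hf : ∀ h ≤ p.d, f (z h) ∈ W) : ∀ v ∈ W, f v ∈ W := by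
    intro v hv
    refine (Submodule.map_span_le f _ W).mpr ?_ (Submodule.mem_map_of_mem hv)
    rintro _ ⟨⟨h, hh⟩, rfl⟩
    exact hf h (by omega)
  have hA : ∀ v ∈ W, p.A v ∈ W := hinv fun h hh => by
    have hAz : p.A (z h) = c h • aeval p.A (tau p.θ (h + 1)) u + p.θ h • z h := by
      simp only [z, map_smul, p.aeval_tau_succ_apply]
      module
    rw [hAz]
    refine add_mem ?_ (Submodule.smul_mem _ _ (hz hh))
    by_cases hch : c h = 0
    · simp [hch]
    rcases hh.lt_or_eq with hlt | rfl
    · have hc' := p.coeff_succ_ne_zero hXV hlt hch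
      have : c h • aeval p.A (tau p.θ (h + 1)) u = (c h * (c (h + 1))⁻¹) • z (h + 1) := by
        simp [z, smul_smul, hc']
      rw [this]
      exact Submodule.smul_mem _ _ (hz hlt)
    · simp [p.aeval_tau_eq_zero]
  have hB : ∀ v ∈ W, p.B v ∈ W := hinv fun h hh => by
    rcases h with _ | ℓ
    · have h0 := p.B_sub_smul_eq_zero_of_mem_split_zero
        (Submodule.smul_mem _ (c 0) (p.aeval_tau_apply_mem_split hu 0))
      rw [sub_eq_zero] at h0
      exact h0 ▸ Submodule.smul_mem _ _ (hz hh)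
    · have h1 : p.B (z (ℓ + 1)) = (p.θ' p.d - p.θ' ℓ) • z ℓ + p.θ' (ℓ + 1) • z (ℓ + 1) :=
        eq_add_of_sub_eq (p.B_sub_smul_coeff_succ_eq hXV hu hh)
      rw [h1]
      exact add_mem (Submodule.smul_mem _ _ (hz (by omega))) (Submodule.smul_mem _ _ (hz hh))
  have hW : W = ⊤ := (p.hIrr W hA hB).resolve_left fun hW =>
    smul_ne_zero hc₀ hwu ((Submodule.mem_bot K).mp (hW ▸ hz hh₀))
  calc Module.finrank K V = Module.finrank K W := by rw [hW, finrank_top]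
    _ ≤ Fintype.card (Fin (p.d + 1)) := finrank_range_le_card _
    _ = p.d + 1 := Fintype.card_fin _

end TridiagonalPair

theorem stmt12_general {K V : Type*} [Field K] [AddCommGroup V] [Module K V]
    [FiniteDimensional K V]
    (p : TridiagonalPair K V)
    (X : Module.End K V) (hX : X ∈ Algebra.adjoin K {p.A}) (hX0 : X ≠ 0)
    (hXV : ∀ v ∈ p.Ew 0, X v ∈ p.Ew p.d) :
    Module.finrank K V = p.d + 1 := by
  obtain ⟨c, rfl⟩ := p.exists_eq_sum_smul_aeval_tau hX
  refine le_antisymm (p.finrank_le_of_coeff_ne_zero ?_ hXV) p.d_add_one_le_finrank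
  by_contra! hc
  exact hX0 (Finset.sum_eq_zero fun h hh => by
    rw [hc h (Nat.lt_succ_iff.mp (Finset.mem_range.mp hh)), zero_smul])

/-- If there exists a nonzero `X ∈ D` with `X V*_0 ⊆ V*_d`, then
`dim V = d + 1`. -/
theorem stmt12 {K V : Type*} [Field K] [AddCommGroup V] [Module K V]
    [FiniteDimensional K V] (hpos : 0 < Module.finrank K V)
    (p : TridiagonalPair K V)
    (X : Module.End K V) (hX : X ∈ Algebra.adjoin K {p.A}) (hX0 : X ≠ 0)
    (hXV : ∀ v ∈ p.Ew 0, X v ∈ p.Ew p.d) :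
    Module.finrank K V = p.d + 1 :=
  stmt12_general p X hX hX0 hXV
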